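/- arXiv:1110.4399 — 3 statements merged into one kernel-verified Lean document; each statement's English description precedes it below -/
import Mathlib

section
/- Let X be a separable Hilbert space, I=[a,b] a compact interval, f : I → X a continuous function, and {φ_n} a Hilbert (complete orthonormal) basis of X. Then the series ∑_{n=1}^∞ (f(t), φ_n)_X φ_n converges to f(t) uniformly in t ∈ I. -/
open Set Filter Topology

/-! The partial sums `P_N x = ∑_{n<N} (x, φ_n) φ_n` are 1-Lipschitz by Bessel's inequality, hence
equicontinuous, and they converge pointwise to `x` because `{φ_n}` is a Hilbert basis. An
equicontinuous family converging pointwise converges uniformly on compact sets, in particular on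
the compact set `f '' [a, b]`. -/

theorem EquicontinuousOn.tendstoUniformlyOn_of_tendsto {ι X α : Type*} [TopologicalSpace X]
    [UniformSpace α] {F : ι → X → α} {f : X → α} {l : Filter ι} {K : Set X}
    (hK : IsCompact K) (hF : EquicontinuousOn F K)
    (hlim : ∀ x ∈ K, Tendsto (F · x) l (𝓝 (f x))) :
    TendstoUniformlyOn F f l K := by
  have : CompactSpace K := isCompact_iff_compactSpace.mp hK
  rw [tendstoUniformlyOn_iff_tendstoUniformly_comp_coe]
  have hFK : Equicontinuous fun i => K.domRestrict (F i) := (equicontinuous_restrict_iff F).mpr hF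
  refine UniformFun.tendsto_iff_tendstoUniformly.mp
    ((hFK.tendsto_uniformFun_iff_pi l (K.domRestrict f)).mpr ?_)
  exact tendsto_pi_nhds.mpr fun x => hlim x x.2

section
variable {ι E : Type*} [NormedAddCommGroup E] [InnerProductSpace ℝ E] {v : ι → E}

theorem Orthonormal.norm_sum_inner_smul_le (hv : Orthonormal ℝ v) (s : Finset ι) (x : E) :
    ‖∑ i ∈ s, inner ℝ x (v i) • v i‖ ≤ ‖x‖ := by
  have hsq : ‖∑ i ∈ s, inner ℝ x (v i) • v i‖ ^ 2 = ∑ i ∈ s, ‖inner ℝ (v i) x‖ ^ 2 := by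
    rw [← real_inner_self_eq_norm_sq, hv.inner_sum]
    refine Finset.sum_congr rfl fun i _ => ?_
    rw [real_inner_comm, Real.norm_eq_abs, sq_abs, sq, conj_trivial]
  exact pow_le_pow_iff_left₀ (norm_nonneg _) (norm_nonneg _) two_ne_zero |>.mp
    (hsq ▸ hv.sum_inner_products_le x)

theorem Orthonormal.lipschitzWith_sum_inner_smul (hv : Orthonormal ℝ v) (s : Finset ι) :
    LipschitzWith 1 fun x : E => ∑ i ∈ s, inner ℝ x (v i) • v i := by
  refine LipschitzWith.of_dist_le_mul fun x y => ?_
  simpa only [dist_eq_norm, NNReal.coe_one, one_mul, ← Finset.sum_sub_distrib, ← sub_smul,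
    inner_sub_left] using hv.norm_sum_inner_smul_le s (x - y)

theorem Orthonormal.tendsto_sum_range_inner_smul [CompleteSpace E] {φ : ℕ → E}
    (hφ : Orthonormal ℝ φ) (hdense : (Submodule.span ℝ (range φ)).topologicalClosure = ⊤)
    (x : E) :
    Tendsto (fun N => ∑ n ∈ Finset.range N, inner ℝ x (φ n) • φ n) atTop (𝓝 x) := by
  let b : HilbertBasis ℕ ℝ E := HilbertBasis.mk hφ hdense.ge
  have hsum : HasSum (fun n => inner ℝ x (φ n) • φ n) x := by
    convert b.hasSum_repr x using 2 with n
    rw [b.repr_apply_apply, HilbertBasis.coe_mk, real_inner_comm]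
  exact hsum.tendsto_sum_nat

end

theorem stmt2_general {X : Type*} [NormedAddCommGroup X] [InnerProductSpace ℝ X] [CompleteSpace X]
    (a b : ℝ)
    (φ : ℕ → X) (hON : Orthonormal ℝ φ)
    (hcomplete : (Submodule.span ℝ (Set.range φ)).topologicalClosure = ⊤)
    (f : ℝ → X) (hf : ContinuousOn f (Icc a b)) :
    TendstoUniformlyOn
      (fun N t => ∑ n ∈ Finset.range N, (inner ℝ (f t) (φ n) : ℝ) • φ n)
      f atTop (Icc a b) := by
  let P : ℕ → X → X := fun N x => ∑ n ∈ Finset.range N, inner ℝ x (φ n) • φ n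
  have hequi : Equicontinuous P :=
    (LipschitzWith.uniformEquicontinuous P 1
      fun N => hON.lipschitzWith_sum_inner_smul _).equicontinuous
  have hP : TendstoUniformlyOn P id atTop (f '' Icc a b) :=
    (hequi.equicontinuousOn _).tendstoUniformlyOn_of_tendsto
      (isCompact_Icc.image_of_continuousOn hf)
      fun x _ => hON.tendsto_sum_range_inner_smul hcomplete x
  exact (hP.comp f).mono (subset_preimage_image f _)

/-- Lemma A.3: for a continuous function `f : [a,b] → X` and a Hilbert basis `{φ_n}` of the
separable Hilbert space `X`, the Fourier series `∑ (f(t),φ_n) φ_n` converges to `f(t)`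
uniformly in `t ∈ [a,b]`. -/
theorem stmt2 {X : Type*} [NormedAddCommGroup X] [InnerProductSpace ℝ X] [CompleteSpace X]
    (a b : ℝ) (hab : a ≤ b)
    (φ : ℕ → X) (hON : Orthonormal ℝ φ)
    (hcomplete : (Submodule.span ℝ (Set.range φ)).topologicalClosure = ⊤)
    (f : ℝ → X) (hf : ContinuousOn f (Icc a b)) :
    TendstoUniformlyOn
      (fun N t => ∑ n ∈ Finset.range N, (inner ℝ (f t) (φ n) : ℝ) • φ n)
      f atTop (Icc a b) :=
  stmt2_general a b φ hON hcomplete f hf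
end

section
/- Let Ω be a bounded Lipschitz domain and f : [0,∞) → L²(Ω) continuous. Then the problem ü(t) = Δu(t) + f(t) (as an equation in H^{-1}(Ω) for each t ≥ 0), u(0) = u̇(0) = 0, has a unique weak solution u ∈ C²([0,∞); H^{-1}(Ω)) ∩ C¹([0,∞); L²(Ω)) ∩ C([0,∞); H¹₀(Ω)), and it satisfies ‖∇u(t)‖_{L²(Ω)} ≤ ∫_0^t ‖f(τ)‖_{L²(Ω)} dτ for all t ≥ 0. -/
/-!
Expanding in the Hilbert basis turns the equation into the oscillators `c'' = -λ c + f_i`, one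
for each mode, which Duhamel's formula solves with frequency `ω = √λ`. Transported to `ℓ²`, the
velocity `u̇(t) = ∫₀ᵗ cos((t - τ)ω) f(τ) dτ` and `ω u(t) = ∫₀ᵗ sin((t - τ)ω) f(τ) dτ` are integrals
of diagonal contractions applied to `f`. These contractions are strongly continuous in `t`, which
gives the regularity of `u`, and `‖∇u(t)‖ = ‖ω u(t)‖` is bounded by `∫₀ᵗ ‖f‖` because they are
contractions. Uniqueness: the energy `c'² + λ c²` of the difference of two solutions is conserved,
hence zero, in every mode.
-/

open Set intervalIntegral
open Filter Topology Real
open MeasureTheory (volume)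
open scoped lp

noncomputable section

namespace lp

variable {ι : Type*}

theorem summable_sq (x : ℓ²(ι, ℝ)) : Summable fun i => x i ^ 2 := by
  simpa [sq] using lp.summable_inner (𝕜 := ℝ) x x

theorem norm_eq_sqrt_tsum_sq (x : ℓ²(ι, ℝ)) : ‖x‖ = √(∑' i, x i ^ 2) := by
  rw [← Real.sqrt_sq (norm_nonneg x), ← real_inner_self_eq_norm_sq, lp.inner_eq_tsum]
  simp [sq]

theorem norm_mul_apply_le {a : ι → ℝ} (ha : ∀ i, |a i| ≤ 1) (x : ℓ²(ι, ℝ)) (i : ι) :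
    ‖a i * x i‖ ≤ ‖x i‖ := by
  simpa [abs_mul] using mul_le_of_le_one_left (abs_nonneg (x i)) (ha i)

theorem intervalIntegral_apply {F : ℝ → ℓ²(ι, ℝ)} {a b : ℝ}
    (hF : IntervalIntegrable F volume a b) (i : ι) :
    (∫ t in a..b, F t) i = ∫ t in a..b, F t i :=
  ((lp.evalCLM ℝ (fun _ => ℝ) 2 i).intervalIntegral_comp_comm hF).symm

theorem continuous_apply {X : Type*} [TopologicalSpace X] {F : X → ℓ²(ι, ℝ)} (hF : Continuous F)
    (i : ι) : Continuous fun x => F x i :=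
  (lp.evalCLM ℝ (fun _ => ℝ) 2 i).continuous.comp hF

def diagonal (a : ι → ℝ) (ha : ∀ i, |a i| ≤ 1) : ℓ²(ι, ℝ) →L[ℝ] ℓ²(ι, ℝ) :=
  LinearMap.mkContinuous
    { toFun := fun x => ⟨fun i => a i * x i, (lp.memℓp x).mono' (norm_mul_apply_le ha x)⟩
      map_add' := fun x y => by ext i; simp [mul_add]; rfl
      map_smul' := fun c x => by ext i; simp [mul_left_comm] }
    1 fun x => by rw [one_mul]; exact lp.norm_mono two_ne_zero (norm_mul_apply_le ha x)

@[simp]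
theorem diagonal_apply (a : ι → ℝ) (ha : ∀ i, |a i| ≤ 1) (x : ℓ²(ι, ℝ)) (i : ι) :
    diagonal a ha x i = a i * x i := rfl

theorem norm_diagonal_apply_le (a : ι → ℝ) (ha : ∀ i, |a i| ≤ 1) (x : ℓ²(ι, ℝ)) :
    ‖diagonal a ha x‖ ≤ ‖x‖ :=
  lp.norm_mono two_ne_zero (norm_mul_apply_le ha x)

variable {X : Type*} [TopologicalSpace X] {a : X → ι → ℝ} (ha : ∀ x i, |a x i| ≤ 1)

include ha in
theorem continuous_diagonal_apply_const (hac : ∀ i, Continuous fun x => a x i) (v : ℓ²(ι, ℝ)) :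
    Continuous fun x => diagonal (a x) (ha x) v := by
  refine continuous_iff_continuousAt.2 fun x₀ => tendsto_iff_norm_sub_tendsto_zero.2 ?_
  have hdom (x : X) (i : ι) : ‖((a x i - a x₀ i) * v i) ^ 2‖ ≤ 2 ^ 2 * v i ^ 2 := by
    have h2 : |a x i - a x₀ i| ≤ 2 := (abs_sub _ _).trans (by linarith [ha x i, ha x₀ i])
    rw [norm_pow, Real.norm_eq_abs, sq_abs, mul_pow, ← sq_abs (a x i - a x₀ i)]
    gcongr
  have hsum : Tendsto (fun x => ∑' i, ((a x i - a x₀ i) * v i) ^ 2) (𝓝 x₀) (𝓝 0) := by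
    simpa using tendsto_tsum_of_dominated_convergence ((summable_sq v).mul_left (2 ^ 2))
      (fun i => ((((hac i).sub continuous_const).mul continuous_const).pow 2).tendsto' x₀ 0
        (by simp)) (Eventually.of_forall hdom)
  have hnorm (x : X) : ‖diagonal (a x) (ha x) v - diagonal (a x₀) (ha x₀) v‖ =
      √(∑' i, ((a x i - a x₀ i) * v i) ^ 2) := by
    rw [norm_eq_sqrt_tsum_sq]
    congr! 3 with i
    simp [sub_mul]
  simpa only [hnorm, Real.sqrt_zero] using hsum.sqrt

include ha in
theorem continuous_diagonal_apply (hac : ∀ i, Continuous fun x => a x i) {G : X → ℓ²(ι, ℝ)}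
    (hG : Continuous G) : Continuous fun x => diagonal (a x) (ha x) (G x) := by
  refine continuous_iff_continuousAt.2 fun x₀ => ?_
  have hsmall : Tendsto (fun x => diagonal (a x) (ha x) (G x - G x₀)) (𝓝 x₀) (𝓝 0) := by
    refine squeeze_zero_norm (fun x => ?_) (tendsto_iff_norm_sub_tendsto_zero.1 (hG.tendsto x₀))
    exact norm_diagonal_apply_le _ _ _
  simpa [ContinuousAt] using hsmall.add ((continuous_diagonal_apply_const ha hac (G x₀)).tendsto x₀)

end lp

section Duhamel

variable {f : ℝ → ℝ}

theorem integral_cos_mul_sub_mul (hf : Continuous f) (ω a t : ℝ) :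
    ∫ τ in a..t, cos (ω * (t - τ)) * f τ =
      cos (ω * t) * (∫ τ in a..t, cos (ω * τ) * f τ) +
        sin (ω * t) * ∫ τ in a..t, sin (ω * τ) * f τ := by
  rw [← integral_const_mul, ← integral_const_mul,
    ← integral_add (Continuous.intervalIntegrable (by fun_prop) _ _)
      (Continuous.intervalIntegrable (by fun_prop) _ _)]
  congr 1 with τ
  rw [mul_sub, cos_sub]
  ring

theorem integral_sin_mul_sub_mul (hf : Continuous f) (ω a t : ℝ) :
    ∫ τ in a..t, sin (ω * (t - τ)) * f τ =
      sin (ω * t) * (∫ τ in a..t, cos (ω * τ) * f τ) -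
        cos (ω * t) * ∫ τ in a..t, sin (ω * τ) * f τ := by
  rw [← integral_const_mul, ← integral_const_mul,
    ← integral_sub (Continuous.intervalIntegrable (by fun_prop) _ _)
      (Continuous.intervalIntegrable (by fun_prop) _ _)]
  congr 1 with τ
  rw [mul_sub, sin_sub]
  ring

theorem hasDerivAt_integral_cos_mul_sub_mul (hf : Continuous f) (ω a t : ℝ) :
    HasDerivAt (fun t => ∫ τ in a..t, cos (ω * (t - τ)) * f τ)
      (f t - ω * ∫ τ in a..t, sin (ω * (t - τ)) * f τ) t := by
  have hc := (Continuous.integral_hasStrictDerivAt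
    (by fun_prop : Continuous fun τ => cos (ω * τ) * f τ) a t).hasDerivAt
  have hs := (Continuous.integral_hasStrictDerivAt
    (by fun_prop : Continuous fun τ => sin (ω * τ) * f τ) a t).hasDerivAt
  have hωt : HasDerivAt (fun s => ω * s) ω t := by simpa using (hasDerivAt_id t).const_mul ω
  simp_rw [integral_cos_mul_sub_mul hf, integral_sin_mul_sub_mul hf]
  refine ((hωt.cos.fun_mul hc).fun_add (hωt.sin.fun_mul hs)).congr_deriv ?_
  linear_combination f t * sin_sq_add_cos_sq (ω * t)

theorem hasDerivAt_integral_sin_mul_sub_mul (hf : Continuous f) (ω a t : ℝ) :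
    HasDerivAt (fun t => ∫ τ in a..t, sin (ω * (t - τ)) * f τ)
      (ω * ∫ τ in a..t, cos (ω * (t - τ)) * f τ) t := by
  have hc := (Continuous.integral_hasStrictDerivAt
    (by fun_prop : Continuous fun τ => cos (ω * τ) * f τ) a t).hasDerivAt
  have hs := (Continuous.integral_hasStrictDerivAt
    (by fun_prop : Continuous fun τ => sin (ω * τ) * f τ) a t).hasDerivAt
  have hωt : HasDerivAt (fun s => ω * s) ω t := by simpa using (hasDerivAt_id t).const_mul ω
  simp_rw [integral_cos_mul_sub_mul hf, integral_sin_mul_sub_mul hf]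
  refine ((hωt.sin.fun_mul hc).fun_sub (hωt.cos.fun_mul hs)).congr_deriv ?_
  ring

end Duhamel

theorem eq_zero_of_hasDerivWithinAt_of_harmonic {d d' : ℝ → ℝ} {lam : ℝ} (hlam : 0 < lam)
    (hd : ∀ t ∈ Ici (0 : ℝ), HasDerivWithinAt d (d' t) (Ici 0) t)
    (hd' : ∀ t ∈ Ici (0 : ℝ), HasDerivWithinAt d' (-(lam * d t)) (Ici 0) t)
    (h0 : d 0 = 0) (h0' : d' 0 = 0) : ∀ t ∈ Ici (0 : ℝ), d t = 0 := by
  intro t ht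
  set E : ℝ → ℝ := fun s => d' s ^ 2 + lam * d s ^ 2
  have hE : ∀ s ∈ Ici (0 : ℝ), HasDerivWithinAt E 0 (Ici 0) s := fun s hs => by
    refine (((hd' s hs).fun_pow 2).fun_add (((hd s hs).fun_pow 2).const_mul lam)).congr_deriv ?_
    ring
  have hEt : E t = E 0 := constant_of_has_deriv_right_zero
    (fun s hs => (hE s hs.1).continuousWithinAt.mono Icc_subset_Ici_self)
    (fun s hs => (hE s hs.1).mono (Ici_subset_Ici.2 hs.1)) t ⟨ht, le_rfl⟩
  simp only [E, h0, h0'] at hEt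
  have hsq : d t ^ 2 = 0 := by nlinarith [sq_nonneg (d' t), sq_nonneg (d t)]
  exact pow_eq_zero_iff two_ne_zero |>.1 hsq

section Propagator

variable {ι : Type*} (ω : ι → ℝ)

/-- With `ω i = √(lam i)`, these are `cos (t √(-Δ))` and `sin (t √(-Δ))` in eigencoordinates. -/
def cosPropagator (t : ℝ) : ℓ²(ι, ℝ) →L[ℝ] ℓ²(ι, ℝ) :=
  lp.diagonal (fun i => cos (ω i * t)) fun _ => abs_cos_le_one _

def sinPropagator (t : ℝ) : ℓ²(ι, ℝ) →L[ℝ] ℓ²(ι, ℝ) :=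
  lp.diagonal (fun i => sin (ω i * t)) fun _ => abs_sin_le_one _

def duhamelCos (F : ℝ → ℓ²(ι, ℝ)) (t : ℝ) : ℓ²(ι, ℝ) :=
  ∫ τ in (0 : ℝ)..t, cosPropagator ω (t - τ) (F τ)

def duhamelSin (F : ℝ → ℓ²(ι, ℝ)) (t : ℝ) : ℓ²(ι, ℝ) :=
  ∫ τ in (0 : ℝ)..t, sinPropagator ω (t - τ) (F τ)

def waveDisplacement (F : ℝ → ℓ²(ι, ℝ)) (t : ℝ) : ℓ²(ι, ℝ) :=
  ∫ s in (0 : ℝ)..t, duhamelCos ω F s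

variable {X : Type*} [TopologicalSpace X] {s : X → ℝ} {G : X → ℓ²(ι, ℝ)}

theorem continuous_cosPropagator_apply (hs : Continuous s) (hG : Continuous G) :
    Continuous fun x => cosPropagator ω (s x) (G x) :=
  lp.continuous_diagonal_apply _ (fun _ => by fun_prop) hG

theorem continuous_sinPropagator_apply (hs : Continuous s) (hG : Continuous G) :
    Continuous fun x => sinPropagator ω (s x) (G x) :=
  lp.continuous_diagonal_apply _ (fun _ => by fun_prop) hG

variable {F : ℝ → ℓ²(ι, ℝ)} (hF : Continuous F)
include hF

theorem continuous_duhamelCos : Continuous (duhamelCos ω F) :=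
  continuous_parametric_intervalIntegral_of_continuous
    (continuous_cosPropagator_apply ω (by fun_prop) (hF.comp continuous_snd)) continuous_id

theorem duhamelCos_apply (t : ℝ) (i : ι) :
    duhamelCos ω F t i = ∫ τ in (0 : ℝ)..t, cos (ω i * (t - τ)) * F τ i :=
  lp.intervalIntegral_apply
    ((continuous_cosPropagator_apply ω (by fun_prop) hF).intervalIntegrable _ _) i

theorem duhamelSin_apply (t : ℝ) (i : ι) :
    duhamelSin ω F t i = ∫ τ in (0 : ℝ)..t, sin (ω i * (t - τ)) * F τ i :=
  lp.intervalIntegral_apply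
    ((continuous_sinPropagator_apply ω (by fun_prop) hF).intervalIntegrable _ _) i

theorem norm_duhamelSin_le {t : ℝ} (ht : 0 ≤ t) : ‖duhamelSin ω F t‖ ≤ ∫ τ in (0 : ℝ)..t, ‖F τ‖ :=
  (norm_integral_le_integral_norm ht).trans <| integral_mono_on ht
    ((continuous_sinPropagator_apply ω (by fun_prop) hF).norm.intervalIntegrable _ _)
    (hF.norm.intervalIntegrable _ _) fun τ _ => lp.norm_diagonal_apply_le _ _ _

theorem hasDerivAt_waveDisplacement (t : ℝ) :
    HasDerivAt (waveDisplacement ω F) (duhamelCos ω F t) t :=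
  ((continuous_duhamelCos ω hF).integral_hasStrictDerivAt 0 t).hasDerivAt

theorem mul_waveDisplacement_apply (t : ℝ) (i : ι) :
    ω i * waveDisplacement ω F t i = duhamelSin ω F t i := by
  have hderiv (s : ℝ) : HasDerivAt (fun s => duhamelSin ω F s i) (ω i * duhamelCos ω F s i) s := by
    simp_rw [duhamelCos_apply ω hF, duhamelSin_apply ω hF]
    exact hasDerivAt_integral_sin_mul_sub_mul (lp.continuous_apply hF i) (ω i) 0 s
  have hcos := lp.continuous_apply (continuous_duhamelCos ω hF) i
  rw [waveDisplacement,
    lp.intervalIntegral_apply ((continuous_duhamelCos ω hF).intervalIntegrable _ _),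
    ← intervalIntegral.integral_const_mul, integral_eq_sub_of_hasDerivAt (fun s _ => hderiv s)
      ((continuous_const.mul hcos).intervalIntegrable _ _)]
  simp [duhamelSin]

theorem hasDerivAt_duhamelCos_apply (t : ℝ) (i : ι) :
    HasDerivAt (fun s => duhamelCos ω F s i) (-(ω i ^ 2 * waveDisplacement ω F t i) + F t i) t := by
  simp_rw [duhamelCos_apply ω hF]
  refine (hasDerivAt_integral_cos_mul_sub_mul (lp.continuous_apply hF i) (ω i) 0 t).congr_deriv ?_
  rw [sq, mul_assoc, mul_waveDisplacement_apply ω hF, duhamelSin_apply ω hF]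
  ring

end Propagator

open scoped InnerProductSpace

theorem HilbertBasis.real_inner_eq_repr {ι H : Type*} [NormedAddCommGroup H]
    [InnerProductSpace ℝ H] (b : HilbertBasis ι ℝ H) (x : H) (i : ι) :
    ⟪x, b i⟫_ℝ = b.repr x i := by
  rw [b.repr_apply_apply, real_inner_comm]

section WaveSolution

variable {ι H : Type*} [NormedAddCommGroup H] [InnerProductSpace ℝ H]

/-- `u` solves `ü = Δu + f`, `u(0) = u̇(0) = 0` with velocity `u'`, where `-Δ φ i = lam i • φ i`. -/
structure IsSpectralWaveSolution (φ : ι → H) (lam : ι → ℝ) (f u u' : ℝ → H) : Prop where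
  zero : u 0 = 0
  deriv_zero : u' 0 = 0
  hasDerivWithinAt : ∀ t ∈ Ici (0 : ℝ), HasDerivWithinAt u (u' t) (Ici 0) t
  continuousOn_deriv : ContinuousOn u' (Ici 0)
  summable : ∀ t ∈ Ici (0 : ℝ), Summable fun i => lam i * ⟪u t, φ i⟫_ℝ ^ 2
  hasDerivWithinAt_coeff : ∀ i, ∀ t ∈ Ici (0 : ℝ),
    HasDerivWithinAt (fun s => ⟪u' s, φ i⟫_ℝ) (-(lam i * ⟪u t, φ i⟫_ℝ) + ⟪f t, φ i⟫_ℝ) (Ici 0) t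

theorem exists_isSpectralWaveSolution (b : HilbertBasis ι ℝ H) {lam : ι → ℝ}
    (hlam : ∀ i, 0 ≤ lam i) {f : ℝ → H} (hf : ContinuousOn f (Ici 0)) :
    ∃ u u' : ℝ → H, IsSpectralWaveSolution b lam f u u' ∧
      ∀ t ∈ Ici (0 : ℝ), √(∑' i, lam i * ⟪u t, b i⟫_ℝ ^ 2) ≤ ∫ τ in (0 : ℝ)..t, ‖f τ‖ := by
  set ω : ι → ℝ := fun i => √(lam i)
  -- extending `f` constantly to `t < 0` makes the forcing continuous on all of `ℝ`
  set F : ℝ → ℓ²(ι, ℝ) := fun t => b.repr (f (max t 0))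
  have hF : Continuous F := b.repr.continuous.comp
    (hf.comp_continuous (continuous_id.max continuous_const) fun t => le_max_right t 0)
  have hFf {t : ℝ} (ht : t ∈ Ici (0 : ℝ)) : F t = b.repr (f t) := by
    simp [F, max_eq_left (mem_Ici.1 ht)]
  have hcoeff (x : ℓ²(ι, ℝ)) (i : ι) : ⟪b.repr.symm x, b i⟫_ℝ = x i := by
    rw [b.real_inner_eq_repr, LinearIsometryEquiv.apply_symm_apply]
  have henergy (t : ℝ) (i : ι) :
      lam i * waveDisplacement ω F t i ^ 2 = duhamelSin ω F t i ^ 2 := by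
    rw [← mul_waveDisplacement_apply ω hF, mul_pow, Real.sq_sqrt (hlam i)]
  refine ⟨fun t => b.repr.symm (waveDisplacement ω F t), fun t => b.repr.symm (duhamelCos ω F t),
    ⟨?_, ?_, fun t _ => ?_, ?_, fun t _ => ?_, fun i t ht => ?_⟩, fun t ht => ?_⟩
  · simp [waveDisplacement]
  · simp [duhamelCos]
  · exact (b.repr.symm.toContinuousLinearEquiv.hasFDerivAt.comp_hasDerivAt t
      (hasDerivAt_waveDisplacement ω hF t)).hasDerivWithinAt
  · exact (b.repr.symm.continuous.comp (continuous_duhamelCos ω hF)).continuousOn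
  · simpa only [hcoeff, henergy] using lp.summable_sq (duhamelSin ω F t)
  · have h := hasDerivAt_duhamelCos_apply ω hF t i
    rw [Real.sq_sqrt (hlam i), hFf ht] at h
    simpa only [hcoeff, b.real_inner_eq_repr] using h.hasDerivWithinAt
  · simp_rw [hcoeff, henergy, ← lp.norm_eq_sqrt_tsum_sq]
    calc ‖duhamelSin ω F t‖ ≤ ∫ τ in (0 : ℝ)..t, ‖F τ‖ := norm_duhamelSin_le ω hF ht
      _ = ∫ τ in (0 : ℝ)..t, ‖f τ‖ := integral_congr fun τ hτ => by
        rw [uIcc_of_le (mem_Ici.1 ht)] at hτ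
        simp only [hFf hτ.1, LinearIsometryEquiv.norm_map]

theorem IsSpectralWaveSolution.eqOn (b : HilbertBasis ι ℝ H) {lam : ι → ℝ}
    (hlam : ∀ i, 0 < lam i) {f u u' w w' : ℝ → H} (hw : IsSpectralWaveSolution b lam f w w')
    (hu : IsSpectralWaveSolution b lam f u u') : EqOn w u (Ici 0) := by
  intro t ht
  refine b.repr.injective (lp.ext (funext fun i => ?_))
  rw [← b.real_inner_eq_repr, ← b.real_inner_eq_repr, ← sub_eq_zero, ← inner_sub_left]
  refine eq_zero_of_hasDerivWithinAt_of_harmonic (hlam i) (d := fun s => ⟪w s - u s, b i⟫_ℝ)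
    (d' := fun s => ⟪w' s - u' s, b i⟫_ℝ)
    (fun s hs => ?_) (fun s hs => ?_) (by simp [hw.zero, hu.zero])
    (by simp [hw.deriv_zero, hu.deriv_zero]) t ht
  · simpa using ((hw.hasDerivWithinAt s hs).sub (hu.hasDerivWithinAt s hs)).inner ℝ
      (hasDerivWithinAt_const s _ (b i))
  · simp_rw [inner_sub_left]
    exact ((hw.hasDerivWithinAt_coeff i s hs).sub (hu.hasDerivWithinAt_coeff i s hs)).congr_deriv
      (by ring)

end WaveSolution

/-- Proposition D.1: for continuous `f : [0,∞) → L²(Ω)`, the problem `ü = Δu + f` (as an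
equation in `H⁻¹(Ω)`, encoded componentwise on the Dirichlet eigenbasis), `u(0) = u̇(0) = 0`,
has a unique weak solution `u ∈ C²([0,∞);H⁻¹) ∩ C¹([0,∞);L²) ∩ C([0,∞);H¹₀)`, and it satisfies
`‖∇u(t)‖_{L²} ≤ ∫_0^t ‖f(τ)‖_{L²} dτ` for all `t ≥ 0`.  Abstract spectral encoding:
`v ∈ H¹₀ ↔ ∑ λ_n (v,φ_n)² < ∞` with `‖∇v‖² = ∑ λ_n (v,φ_n)²`, and the `H⁻¹`-valued wave
equation holds iff every Fourier coefficient satisfies `c_n'' = −λ_n c_n + (f,φ_n)`. -/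
theorem stmt15 {H : Type*} [NormedAddCommGroup H] [InnerProductSpace ℝ H] [CompleteSpace H]
    (φ : ℕ → H) (hON : Orthonormal ℝ φ)
    (hcomplete : (Submodule.span ℝ (Set.range φ)).topologicalClosure = ⊤)
    (lam : ℕ → ℝ) (hpos : ∀ n, 0 < lam n)
    (f : ℝ → H) (hf : ContinuousOn f (Ici 0)) :
    ∃ u u' : ℝ → H,
      u 0 = 0 ∧ u' 0 = 0 ∧
      (∀ t ∈ Ici (0:ℝ), HasDerivWithinAt u (u' t) (Ici 0) t) ∧
      ContinuousOn u' (Ici 0) ∧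
      -- u(t) ∈ H¹₀ with continuous H¹₀-norm information
      (∀ t ∈ Ici (0:ℝ), Summable (fun n => lam n * (inner ℝ (u t) (φ n) : ℝ) ^ 2)) ∧
      -- the wave equation in H⁻¹, componentwise on the eigenbasis
      (∀ n, ∀ t ∈ Ici (0:ℝ), HasDerivWithinAt (fun s => (inner ℝ (u' s) (φ n) : ℝ))
        (-(lam n * (inner ℝ (u t) (φ n) : ℝ)) + (inner ℝ (f t) (φ n) : ℝ)) (Ici 0) t) ∧
      -- the energy bound ‖∇u(t)‖ ≤ ∫₀ᵗ ‖f‖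
      (∀ t ∈ Ici (0:ℝ),
        Real.sqrt (∑' n, lam n * (inner ℝ (u t) (φ n) : ℝ) ^ 2) ≤
          ∫ τ in (0:ℝ)..t, ‖f τ‖) ∧
      -- uniqueness among weak solutions
      (∀ w w' : ℝ → H, w 0 = 0 → w' 0 = 0 →
        (∀ t ∈ Ici (0:ℝ), HasDerivWithinAt w (w' t) (Ici 0) t) →
        ContinuousOn w' (Ici 0) →
        (∀ t ∈ Ici (0:ℝ), Summable (fun n => lam n * (inner ℝ (w t) (φ n) : ℝ) ^ 2)) →
        (∀ n, ∀ t ∈ Ici (0:ℝ), HasDerivWithinAt (fun s => (inner ℝ (w' s) (φ n) : ℝ))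
          (-(lam n * (inner ℝ (w t) (φ n) : ℝ)) + (inner ℝ (f t) (φ n) : ℝ)) (Ici 0) t) →
        ∀ t ∈ Ici (0:ℝ), w t = u t) := by
  obtain ⟨b, rfl⟩ : ∃ b : HilbertBasis ℕ ℝ H, ⇑b = φ :=
    ⟨_, HilbertBasis.coe_mk hON hcomplete.ge⟩
  obtain ⟨u, u', hu, henergy⟩ := exists_isSpectralWaveSolution b (fun n => (hpos n).le) hf
  exact ⟨u, u', hu.zero, hu.deriv_zero, hu.hasDerivWithinAt, hu.continuousOn_deriv, hu.summable,
    hu.hasDerivWithinAt_coeff, henergy, fun w w' h0 h0' hd hc hs hwave t ht =>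
      IsSpectralWaveSolution.eqOn b hpos ⟨h0, h0', hd, hc, hs, hwave⟩ hu ht⟩
end
end

section
/- Let Ω be a bounded Lipschitz domain, f : [0,∞) → L²(Ω) continuous, and u the weak solution of ü = Δu + f with vanishing initial data. Then the function w(t) := ∫_0^t u(τ) dτ is continuous from [0,∞) into D(Δ), i.e., w(t) ∈ H¹₀(Ω) with Δw(t) ∈ L²(Ω) for every t, and t ↦ Δw(t) is continuous into L²(Ω). -/
open Set intervalIntegral

/-!
Integrating the $n$-th mode of the wave equation once in time and using the vanishing initial
velocity gives $\lambda_n (w(t), \varphi_n) = (F(t) - \dot u(t), \varphi_n)$ with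
$F(t) = \int_0^t f$. Hence $-\Delta w(t) = F(t) - \dot u(t)$, a continuous $L^2$-valued function,
and the square summability of $\lambda_n (w(t), \varphi_n)$ is Bessel's inequality for it.
-/

lemma continuousOn_Ici_of_forall_continuousOn_Icc {E : Type*} [TopologicalSpace E]
    {g : ℝ → E} {a : ℝ} (hg : ∀ b, a ≤ b → ContinuousOn g (Icc a b)) :
    ContinuousOn g (Ici a) := by
  intro t ht
  have hnhds : Icc a (t + 1) ∈ nhdsWithin t (Ici a) := by
    rw [← Ici_inter_Iic]
    exact inter_mem_nhdsWithin _ (Iic_mem_nhds (by linarith))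
  exact (hg (t + 1) (by linarith [mem_Ici.1 ht]) t ⟨ht, by linarith⟩).mono_of_mem_nhdsWithin
    hnhds

section Primitive

variable {E : Type*} [NormedAddCommGroup E] {g : ℝ → E} {a : ℝ}

lemma ContinuousOn.intervalIntegrable_of_Ici (hg : ContinuousOn g (Ici a)) {t : ℝ}
    (ht : a ≤ t) : IntervalIntegrable g MeasureTheory.volume a t :=
  (hg.mono (by rw [uIcc_of_le ht]; exact Icc_subset_Ici_self)).intervalIntegrable

lemma ContinuousOn.continuousOn_primitive_Ici [NormedSpace ℝ E] (hg : ContinuousOn g (Ici a)) :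
    ContinuousOn (fun t => ∫ τ in a..t, g τ) (Ici a) :=
  continuousOn_Ici_of_forall_continuousOn_Icc fun b hab => by
    simpa only [uIcc_of_le hab] using
      continuousOn_primitive_interval' (hg.intervalIntegrable_of_Ici hab) left_mem_uIcc

end Primitive

lemma inner_intervalIntegral_left {H : Type*} [NormedAddCommGroup H] [InnerProductSpace ℝ H]
    [CompleteSpace H] {g : ℝ → H} {a b : ℝ} (hg : IntervalIntegrable g MeasureTheory.volume a b)
    (x : H) : (inner ℝ (∫ τ in a..b, g τ) x : ℝ) = ∫ τ in a..b, (inner ℝ (g τ) x : ℝ) := by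
  simp only [real_inner_comm x]
  exact ((innerSL ℝ x).intervalIntegral_comp_comm hg).symm

lemma mul_integral_eq_integral_sub_of_hasDerivWithinAt {x y z : ℝ → ℝ} {lam a t : ℝ}
    (hx : ContinuousOn x (Ici a)) (hz : ContinuousOn z (Ici a))
    (hy : ∀ s ∈ Ici a, HasDerivWithinAt y (-(lam * x s) + z s) (Ici a) s) (hy0 : y a = 0)
    (ht : a ≤ t) : lam * ∫ s in a..t, x s = (∫ s in a..t, z s) - y t := by
  have hxi := hx.intervalIntegrable_of_Ici ht
  have hzi := hz.intervalIntegrable_of_Ici ht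
  have hrhs : IntervalIntegrable (fun s => -(lam * x s)) MeasureTheory.volume a t :=
    (hxi.const_mul lam).neg
  have hy_cont : ContinuousOn y (Icc a t) :=
    fun s hs => (hy s hs.1).continuousWithinAt.mono Icc_subset_Ici_self
  have hftc := integral_eq_sub_of_hasDerivAt_of_le ht hy_cont
    (fun s hs => (hy s hs.1.le).hasDerivAt (Ici_mem_nhds hs.1))
    (hrhs.add hzi)
  rw [integral_add hrhs hzi, integral_neg, integral_const_mul, hy0] at hftc
  linarith

lemma Orthonormal.hasSum_inner_smul_of_dense {𝕜 H ι : Type*} [RCLike 𝕜] [NormedAddCommGroup H]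
    [InnerProductSpace 𝕜 H] [CompleteSpace H] {φ : ι → H} (hON : Orthonormal 𝕜 φ)
    (hsp : (Submodule.span 𝕜 (Set.range φ)).topologicalClosure = ⊤) (x : H) :
    HasSum (fun i => (inner 𝕜 (φ i) x : 𝕜) • φ i) x := by
  let b : HilbertBasis ι 𝕜 H := HilbertBasis.mk hON hsp.ge
  have hb : ⇑b = φ := HilbertBasis.coe_mk hON _
  simpa only [b.repr_apply_apply, hb] using b.hasSum_repr x

theorem stmt16_general {H : Type*} [NormedAddCommGroup H] [InnerProductSpace ℝ H] [CompleteSpace H]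
    (φ : ℕ → H) (hON : Orthonormal ℝ φ)
    (hcomplete : (Submodule.span ℝ (Set.range φ)).topologicalClosure = ⊤)
    (lam : ℕ → ℝ)
    (f : ℝ → H) (hf : ContinuousOn f (Ici 0))
    (u u' : ℝ → H)
    (h0' : u' 0 = 0)
    (hu : ∀ t ∈ Ici (0:ℝ), HasDerivWithinAt u (u' t) (Ici 0) t)
    (hu' : ContinuousOn u' (Ici 0))
    (heq : ∀ n, ∀ t ∈ Ici (0:ℝ), HasDerivWithinAt (fun s => (inner ℝ (u' s) (φ n) : ℝ))
      (-(lam n * (inner ℝ (u t) (φ n) : ℝ)) + (inner ℝ (f t) (φ n) : ℝ)) (Ici 0) t)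
    (w : ℝ → H) (hw : ∀ t, w t = ∫ τ in (0:ℝ)..t, u τ) :
    (∀ t ∈ Ici (0:ℝ), Summable (fun n => lam n ^ 2 * (inner ℝ (w t) (φ n) : ℝ) ^ 2)) ∧
    ContinuousOn (fun t => -∑' n, (lam n * (inner ℝ (w t) (φ n) : ℝ)) • φ n) (Ici 0) := by
  have hu_cont : ContinuousOn u (Ici 0) := fun t ht => (hu t ht).continuousWithinAt
  set g : ℝ → H := fun t => (∫ τ in (0:ℝ)..t, f τ) - u' t
  have hg : ContinuousOn g (Ici 0) := hf.continuousOn_primitive_Ici.sub hu'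
  have hcoeff : ∀ t ∈ Ici (0:ℝ), ∀ n,
      lam n * (inner ℝ (w t) (φ n) : ℝ) = inner ℝ (φ n) (g t) := by
    intro t ht n
    rw [hw, real_inner_comm (g t), inner_sub_left,
      inner_intervalIntegral_left (hu_cont.intervalIntegrable_of_Ici ht),
      inner_intervalIntegral_left (hf.intervalIntegrable_of_Ici ht)]
    exact mul_integral_eq_integral_sub_of_hasDerivWithinAt
      (hu_cont.inner continuousOn_const) (hf.inner continuousOn_const) (heq n)
      (by rw [h0', inner_zero_left]) ht
  refine ⟨fun t ht => ?_, hg.neg.congr fun t ht => ?_⟩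
  · refine (hON.inner_products_summable (g t)).congr fun n => ?_
    rw [Real.norm_eq_abs, sq_abs, ← hcoeff t ht n]
    ring
  · simp only [hcoeff t ht, (hON.hasSum_inner_smul_of_dense hcomplete (g t)).tsum_eq, Pi.neg_apply]

/-- Regularization by time integration (last part of Proposition D.1): if `u` is the weak
solution of `ü = Δu + f` (equation in `H⁻¹(Ω)`, encoded componentwise on the Dirichlet
eigenbasis) with vanishing initial data and `f : [0,∞) → L²(Ω)` continuous, then
`w(t) = ∫_0^t u(τ) dτ` is continuous from `[0,∞)` into `D(Δ)`: `w(t) ∈ H¹₀` with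
`Δw(t) ∈ L²` for every `t ≥ 0` (spectrally, `∑ λ_n² (w(t),φ_n)² < ∞`), and
`t ↦ Δw(t) = −∑ λ_n (w(t),φ_n) φ_n` is continuous into `L²(Ω)`. -/
theorem stmt16 {H : Type*} [NormedAddCommGroup H] [InnerProductSpace ℝ H] [CompleteSpace H]
    (φ : ℕ → H) (hON : Orthonormal ℝ φ)
    (hcomplete : (Submodule.span ℝ (Set.range φ)).topologicalClosure = ⊤)
    (lam : ℕ → ℝ) (hpos : ∀ n, 0 < lam n)
    (f : ℝ → H) (hf : ContinuousOn f (Ici 0))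
    (u u' : ℝ → H)
    (h0 : u 0 = 0) (h0' : u' 0 = 0)
    (hu : ∀ t ∈ Ici (0:ℝ), HasDerivWithinAt u (u' t) (Ici 0) t)
    (hu' : ContinuousOn u' (Ici 0))
    (hV : ∀ t ∈ Ici (0:ℝ), Summable (fun n => lam n * (inner ℝ (u t) (φ n) : ℝ) ^ 2))
    (heq : ∀ n, ∀ t ∈ Ici (0:ℝ), HasDerivWithinAt (fun s => (inner ℝ (u' s) (φ n) : ℝ))
      (-(lam n * (inner ℝ (u t) (φ n) : ℝ)) + (inner ℝ (f t) (φ n) : ℝ)) (Ici 0) t)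
    (w : ℝ → H) (hw : ∀ t, w t = ∫ τ in (0:ℝ)..t, u τ) :
    (∀ t ∈ Ici (0:ℝ), Summable (fun n => lam n ^ 2 * (inner ℝ (w t) (φ n) : ℝ) ^ 2)) ∧
    ContinuousOn (fun t => -∑' n, (lam n * (inner ℝ (w t) (φ n) : ℝ)) • φ n) (Ici 0) :=
  stmt16_general φ hON hcomplete lam f hf u u' h0' hu hu' heq w hw
end
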